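/- Let α ∈ (0,1). Then Φ(x) > 0 for every x ≥ 0. -/

import Mathlib

/-!
Write `Φ(x) = ψ(x^{1+α}/(1+α))` with `ψ(t) = Σ (-1)ⁿ bₙ tⁿ`. Log-convexity of `Γ` gives Wendel's
inequality `Γ(c+1) ≤ (c+α)^{1-α} Γ(c+α)`, so `b_{n+1}/bₙ = Γ(cₙ)/Γ(cₙ+α) → 0` for
`cₙ = (1+α)n+2`, and `ψ` is entire.
Integrating term by term against the Beta integral shows that `Φ` solves the Volterra equation
`Φ(x) = 1 - c ∫₀ˣ (x-s)^{α-1} s Φ(s) ds` with `c = 1/((1+α)Γ(α)) > 0`.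

Positivity holds for every continuous solution of such an equation with `0 < α ≤ 1`. At a first
zero `x₀ > 0`, the kernel `(x-s)^{α-1}` being nonincreasing in `x` gives, for `y ≤ x₀`,
`Φ(y) = Φ(y) - Φ(x₀) ≤ c x₀ (max_{[y,x₀]} Φ) (x₀-y)^α/α`. Taking for `y` a maximiser of `Φ` on
`[x₀-ε, x₀]` with `c x₀ ε^α/α < 1` forces that positive maximum below itself.
-/

open MeasureTheory Real Set
/-- The function `Φ(x) = Σ (−1)ⁿ bₙ (x^{1+α}/(1+α))ⁿ`, where
`bₙ = ∏_{i<n} Γ(αi+i+2)/Γ(α(i+1)+i+2)`; it equals the generalized Mittag-Leffler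
function `E_{α,1+1/α,1/α}(−x^{1+α}/(1+α))`. -/
noncomputable def PhiF (α : ℝ) (x : ℝ) : ℝ :=
  ∑' n : ℕ, (-1:ℝ)^n *
    (∏ i ∈ Finset.range n, Real.Gamma (α * i + i + 2) / Real.Gamma (α * (i+1) + i + 2)) *
    (x ^ (1+α) / (1+α)) ^ n

open Filter Topology

theorem Real.Gamma_add_one_le_rpow_mul_Gamma_add {c a : ℝ} (hc : 0 < c) (ha₀ : 0 < a)
    (ha₁ : a < 1) : Gamma (c + 1) ≤ (c + a) ^ (1 - a) * Gamma (c + a) := by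
  have hca : 0 < c + a := by linarith
  have hΓ : 0 < Gamma (c + a) := Gamma_pos_of_pos hca
  calc Gamma (c + 1) = Gamma (a * (c + a) + (1 - a) * (c + a + 1)) := by ring_nf
    _ ≤ Gamma (c + a) ^ a * Gamma (c + a + 1) ^ (1 - a) :=
      Gamma_mul_add_mul_le_rpow_Gamma_mul_rpow_Gamma hca (by linarith) ha₀ (by linarith)
        (by ring)
    _ = (c + a) ^ (1 - a) * Gamma (c + a) := by
      rw [Gamma_add_one hca.ne', mul_rpow hca.le hΓ.le, ← mul_assoc, mul_comm _ ((c + a) ^ _),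
        mul_assoc, ← rpow_add hΓ, add_sub_cancel, rpow_one]

theorem Real.tendsto_Gamma_div_Gamma_add_atTop {a : ℝ} (ha₀ : 0 < a) (ha₁ : a < 1) :
    Tendsto (fun c => Gamma c / Gamma (c + a)) atTop (𝓝 0) := by
  have hlim : Tendsto (fun c => 2 * (c + a) ^ (-a)) atTop (𝓝 0) := by
    simpa using ((tendsto_rpow_neg_atTop ha₀).comp
      (tendsto_atTop_add_const_right _ a tendsto_id)).const_mul 2
  refine tendsto_of_tendsto_of_tendsto_of_le_of_le' tendsto_const_nhds hlim ?_ ?_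
  · filter_upwards [eventually_gt_atTop 0] with c hc
    exact div_nonneg (Gamma_pos_of_pos hc).le (Gamma_pos_of_pos (by linarith)).le
  · filter_upwards [eventually_ge_atTop a, eventually_gt_atTop 0] with c hac hc
    have hca : 0 < c + a := by linarith
    have h := Gamma_add_one_le_rpow_mul_Gamma_add hc ha₀ ha₁
    rw [Gamma_add_one hc.ne'] at h
    rw [div_le_iff₀ (Gamma_pos_of_pos hca)]
    calc Gamma c = (c * Gamma c) / c := by field_simp
      _ ≤ (c + a) ^ (1 - a) * Gamma (c + a) / c := by gcongr
      _ = (c + a) / c * (c + a) ^ (-a) * Gamma (c + a) := by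
        rw [sub_eq_add_neg, rpow_add hca, rpow_one]; ring
      _ ≤ 2 * (c + a) ^ (-a) * Gamma (c + a) := by
        gcongr
        rw [div_le_iff₀ hc]; linarith

theorem integral_rpow_mul_sub_rpow {a u v : ℝ} (ha : 0 < a) (hu : 0 < u) (hv : 0 < v) :
    ∫ s in 0..a, s ^ (u - 1) * (a - s) ^ (v - 1) =
      Gamma u * Gamma v / Gamma (u + v) * a ^ (u + v - 1) := by
  have h := Complex.betaIntegral_scaled u v ha
  rw [Complex.betaIntegral_eq_Gamma_mul_div _ _ (by simpa) (by simpa), ← Complex.ofReal_add,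
    Complex.Gamma_ofReal, Complex.Gamma_ofReal, Complex.Gamma_ofReal, Complex.ofReal_add] at h
  apply Complex.ofReal_injective
  rw [← intervalIntegral.integral_ofReal, mul_comm]
  push_cast [Complex.ofReal_cpow ha.le]
  rw [← h]
  refine intervalIntegral.integral_congr fun s hs => ?_
  rw [uIcc_of_le ha.le] at hs
  push_cast [Complex.ofReal_cpow hs.1, Complex.ofReal_cpow (sub_nonneg.2 hs.2)]
  rfl

theorem intervalIntegrable_sub_rpow {α : ℝ} (hα : 0 < α) (x a b : ℝ) :
    IntervalIntegrable (fun s => (x - s) ^ (α - 1)) volume a b := by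
  simpa using (intervalIntegral.intervalIntegrable_rpow' (a := x - a) (b := x - b)
    (by linarith : (-1 : ℝ) < α - 1)).comp_sub_left x

theorem integral_sub_rpow {α : ℝ} (hα : 0 < α) (x y : ℝ) :
    ∫ s in y..x, (x - s) ^ (α - 1) = (x - y) ^ α / α := by
  rw [intervalIntegral.integral_comp_sub_left (fun u => u ^ (α - 1)), sub_self,
    integral_rpow (Or.inl (by linarith)), sub_add_cancel, zero_rpow hα.ne', sub_zero]

theorem exists_first_zero {f : ℝ → ℝ} {X : ℝ} (hX₀ : 0 ≤ X) (hf : ContinuousOn f (Icc 0 X))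
    (h₀ : 0 < f 0) (hX : f X ≤ 0) : ∃ x₀ ∈ Ioc 0 X, f x₀ = 0 ∧ ∀ y ∈ Ico 0 x₀, 0 < f y := by
  set S := Icc 0 X ∩ f ⁻¹' Iic 0
  have hS : IsClosed S := hf.preimage_isClosed_of_isClosed isClosed_Icc isClosed_Iic
  have hbdd : BddBelow S := ⟨0, fun s hs => hs.1.1⟩
  obtain ⟨⟨hx₀, hx₀X⟩, hfx₀⟩ : sInf S ∈ S := hS.csInf_mem ⟨X, ⟨hX₀, le_rfl⟩, hX⟩ hbdd
  have hpos : ∀ y ∈ Ico 0 (sInf S), 0 < f y := fun y hy => not_le.1 fun hfy =>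
    (csInf_le hbdd ⟨⟨hy.1, hy.2.le.trans hx₀X⟩, hfy⟩).not_gt hy.2
  obtain ⟨z, hz, hfz⟩ := intermediate_value_Icc' hx₀ (hf.mono (Icc_subset_Icc_right hx₀X))
    ⟨hfx₀, h₀.le⟩
  have hzS : z = sInf S :=
    le_antisymm hz.2 (csInf_le hbdd ⟨⟨hz.1, hz.2.trans hx₀X⟩, hfz.le⟩)
  refine ⟨sInf S, ⟨hx₀.lt_of_ne fun h => h₀.ne' ?_, hx₀X⟩, by rw [← hzS, hfz], hpos⟩
  simpa [hzS.trans h.symm] using hfz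

section Volterra

variable {α c : ℝ} {f : ℝ → ℝ}

theorem integral_sub_rpow_mul_le (hα₀ : 0 < α) (hα₁ : α ≤ 1) {g : ℝ → ℝ} {x y : ℝ}
    (hy : 0 ≤ y) (hyx : y ≤ x) (hg : ContinuousOn g (Icc 0 y)) (hg₀ : ∀ s ∈ Icc 0 y, 0 ≤ g s) :
    ∫ s in 0..y, (x - s) ^ (α - 1) * g s ≤ ∫ s in 0..y, (y - s) ^ (α - 1) * g s := by
  have hg' : ContinuousOn g (uIcc 0 y) := by rwa [uIcc_of_le hy]
  refine intervalIntegral.integral_mono_on_of_le_Ioo hy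
    ((intervalIntegrable_sub_rpow hα₀ x 0 y).mul_continuousOn hg')
    ((intervalIntegrable_sub_rpow hα₀ y 0 y).mul_continuousOn hg') fun s hs => ?_
  exact mul_le_mul_of_nonneg_right
    (rpow_le_rpow_of_nonpos (sub_pos.2 hs.2) (by linarith) (by linarith))
    (hg₀ s (Ioo_subset_Icc_self hs))

theorem sub_le_of_volterra (hα₀ : 0 < α) (hα₁ : α ≤ 1) (hc : 0 ≤ c) {x y M : ℝ} (hy : 0 ≤ y)
    (hyx : y ≤ x) (hcont : ContinuousOn f (Icc 0 x)) (hf₀ : ∀ s ∈ Icc 0 x, 0 ≤ f s)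
    (hM : ∀ s ∈ Icc y x, f s ≤ M)
    (hfy : f y = 1 - c * ∫ s in 0..y, (y - s) ^ (α - 1) * (s * f s))
    (hfx : f x = 1 - c * ∫ s in 0..x, (x - s) ^ (α - 1) * (s * f s)) :
    f y - f x ≤ c * (x * M * ((x - y) ^ α / α)) := by
  have hg : ContinuousOn (fun s => s * f s) (Icc 0 x) := continuousOn_id.mul hcont
  have hint : ∀ a b, 0 ≤ a → a ≤ b → b ≤ x →
      IntervalIntegrable (fun s => (x - s) ^ (α - 1) * (s * f s)) volume a b :=
    fun a b ha hab hb => (intervalIntegrable_sub_rpow hα₀ x a b).mul_continuousOn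
      (hg.mono (by rw [uIcc_of_le hab]; exact Icc_subset_Icc ha hb))
  have hsplit := intervalIntegral.integral_add_adjacent_intervals
    (hint 0 y le_rfl hy hyx) (hint y x hy hyx le_rfl)
  have hhead := integral_sub_rpow_mul_le hα₀ hα₁ hy hyx (hg.mono (Icc_subset_Icc_right hyx))
    fun s hs => mul_nonneg hs.1 (hf₀ s ⟨hs.1, hs.2.trans hyx⟩)
  have htail : ∫ s in y..x, (x - s) ^ (α - 1) * (s * f s) ≤
      ∫ s in y..x, (x - s) ^ (α - 1) * (x * M) := by
    refine intervalIntegral.integral_mono_on hyx (hint y x hy hyx le_rfl)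
      ((intervalIntegrable_sub_rpow hα₀ x y x).mul_const _) fun s hs => ?_
    have hfs := hf₀ s ⟨hy.trans hs.1, hs.2⟩
    exact mul_le_mul_of_nonneg_left
      (mul_le_mul hs.2 (hM s hs) hfs (hy.trans (hs.1.trans hs.2)))
      (rpow_nonneg (sub_nonneg.2 hs.2) _)
  rw [intervalIntegral.integral_mul_const, integral_sub_rpow hα₀, mul_comm] at htail
  have := mul_le_mul_of_nonneg_left (add_le_add hhead htail) hc
  rw [hfy, hfx, ← hsplit]
  linarith

theorem pos_of_volterra (hα₀ : 0 < α) (hα₁ : α ≤ 1) (hc : 0 ≤ c)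
    (hcont : ContinuousOn f (Ici 0))
    (hf : ∀ x ≥ 0, f x = 1 - c * ∫ s in 0..x, (x - s) ^ (α - 1) * (s * f s)) :
    ∀ x ≥ 0, 0 < f x := by
  intro X hX
  by_contra! hfX
  have hf0 : f 0 = 1 := by simpa using hf 0 le_rfl
  obtain ⟨x₀, ⟨hx₀, -⟩, hfx₀, hpos⟩ :=
    exists_first_zero hX (hcont.mono Icc_subset_Ici_self) (by rw [hf0]; exact one_pos) hfX
  have hcont₀ : ContinuousOn f (Icc 0 x₀) := hcont.mono Icc_subset_Ici_self
  have hf₀ : ∀ s ∈ Icc 0 x₀, 0 ≤ f s := fun s hs =>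
    hs.2.eq_or_lt.elim (fun h => (h ▸ hfx₀).ge) fun h => (hpos s ⟨hs.1, h⟩).le
  obtain ⟨ε, ⟨hε₀, hεx⟩, hε⟩ : ∃ ε ∈ Ioo 0 x₀, c * x₀ * ε ^ α / α < 1 := by
    have hlim : Tendsto (fun ε : ℝ => c * x₀ * ε ^ α / α) (𝓝[>] 0) (𝓝 0) := by
      refine tendsto_nhdsWithin_of_tendsto_nhds ?_
      simpa [zero_rpow hα₀.ne'] using
        (((continuousAt_rpow_const 0 α (Or.inr hα₀.le)).const_mul (c * x₀)).div_const α).tendsto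
    exact (Eventually.and (Ioo_mem_nhdsGT hx₀) (hlim.eventually (gt_mem_nhds one_pos))).exists
  obtain ⟨y, ⟨hy, hyx⟩, hmax⟩ := isCompact_Icc.exists_isMaxOn
    (nonempty_Icc.2 (by linarith : x₀ - ε ≤ x₀)) (hcont₀.mono (Icc_subset_Icc_left (by linarith)))
  have hfy : 0 < f y := (hpos _ ⟨by linarith, by linarith⟩).trans_le
    (hmax (left_mem_Icc.2 (by linarith)))
  have hy₀ : 0 ≤ y := by linarith
  have key := sub_le_of_volterra hα₀ hα₁ hc hy₀ hyx hcont₀ hf₀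
    (fun s hs => hmax ⟨by linarith [hs.1], hs.2⟩) (hf y hy₀) (hf x₀ hx₀.le)
  have hpow : (x₀ - y) ^ α ≤ ε ^ α := rpow_le_rpow (by linarith) (by linarith) hα₀.le
  have hle : f y ≤ f y * (c * x₀ * ε ^ α / α) :=
    calc f y ≤ c * (x₀ * f y * ((x₀ - y) ^ α / α)) := by linarith
      _ = f y * (c * x₀ * (x₀ - y) ^ α / α) := by ring
      _ ≤ f y * (c * x₀ * ε ^ α / α) := by gcongr
  exact hle.not_gt (mul_lt_of_lt_one_right hfy hε)

end Volterra

noncomputable def phiCoeff (α : ℝ) (n : ℕ) : ℝ :=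
  ∏ i ∈ Finset.range n, Gamma (α * i + i + 2) / Gamma (α * (i + 1) + i + 2)

noncomputable def phiSeries (α t : ℝ) : ℝ :=
  ∑' n : ℕ, (-1) ^ n * phiCoeff α n * t ^ n

theorem PhiF_eq_phiSeries (α x : ℝ) : PhiF α x = phiSeries α (x ^ (1 + α) / (1 + α)) := rfl

theorem phiCoeff_zero (α : ℝ) : phiCoeff α 0 = 1 := Finset.prod_range_zero _

theorem phiCoeff_succ (α : ℝ) (n : ℕ) : phiCoeff α (n + 1) =
    phiCoeff α n * (Gamma ((1 + α) * n + 2) / Gamma ((1 + α) * n + 2 + α)) := by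
  rw [phiCoeff, Finset.prod_range_succ, ← phiCoeff]
  congr 3 <;> ring

section Phi

variable {α : ℝ}

theorem phiCoeff_pos (hα : 0 < α) (n : ℕ) : 0 < phiCoeff α n :=
  Finset.prod_pos fun i _ => div_pos (Gamma_pos_of_pos (by positivity))
    (Gamma_pos_of_pos (by positivity))

theorem tendsto_phiCoeff_succ_div (hα₀ : 0 < α) (hα₁ : α < 1) :
    Tendsto (fun n => phiCoeff α (n + 1) / phiCoeff α n) atTop (𝓝 0) := by
  have hc : Tendsto (fun n : ℕ => (1 + α) * n + 2) atTop atTop :=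
    tendsto_atTop_add_const_right _ 2
      ((tendsto_natCast_atTop_atTop).const_mul_atTop (by linarith))
  refine ((tendsto_Gamma_div_Gamma_add_atTop hα₀ hα₁).comp hc).congr fun n => ?_
  rw [phiCoeff_succ, mul_div_cancel_left₀ _ (phiCoeff_pos hα₀ n).ne']
  rfl

theorem summable_phiCoeff_mul_pow (hα₀ : 0 < α) (hα₁ : α < 1) (t : ℝ) :
    Summable fun n => phiCoeff α n * t ^ n := by
  refine summable_of_ratio_norm_eventually_le (r := 1 / 2) (by norm_num) ?_
  have hlim := (tendsto_phiCoeff_succ_div hα₀ hα₁).mul_const |t|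
  rw [zero_mul] at hlim
  filter_upwards [hlim.eventually (ge_mem_nhds (by norm_num : (0 : ℝ) < 1 / 2))] with n hn
  have hb := phiCoeff_pos hα₀ n
  calc ‖phiCoeff α (n + 1) * t ^ (n + 1)‖
      = phiCoeff α (n + 1) / phiCoeff α n * |t| * ‖phiCoeff α n * t ^ n‖ := by
        rw [Real.norm_eq_abs, Real.norm_eq_abs, abs_mul, abs_mul, abs_of_pos hb,
          abs_of_pos (phiCoeff_pos hα₀ _), abs_pow, abs_pow]
        field_simp
        ring
    _ ≤ 1 / 2 * ‖phiCoeff α n * t ^ n‖ := by gcongr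

theorem summable_phiSeries (hα₀ : 0 < α) (hα₁ : α < 1) (t : ℝ) :
    Summable fun n => (-1) ^ n * phiCoeff α n * t ^ n := by
  refine .of_norm ((summable_phiCoeff_mul_pow hα₀ hα₁ |t|).congr fun n => ?_)
  rw [Real.norm_eq_abs, abs_mul, abs_mul, abs_pow, abs_neg, abs_one, one_pow, one_mul, abs_pow,
    abs_of_pos (phiCoeff_pos hα₀ n)]

theorem continuous_phiSeries (hα₀ : 0 < α) (hα₁ : α < 1) : Continuous (phiSeries α) := by
  refine continuous_iff_continuousAt.2 fun t => ?_
  have hR : t ∈ Metric.ball (0 : ℝ) (‖t‖ + 1) := by simp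
  refine (continuousOn_tsum (fun n => by fun_prop)
    (summable_phiCoeff_mul_pow hα₀ hα₁ (‖t‖ + 1)) fun n s hs => ?_).continuousAt
    (Metric.isOpen_ball.mem_nhds hR)
  rw [mem_ball_zero_iff] at hs
  rw [norm_mul, norm_mul, norm_pow, norm_neg, norm_one, one_pow, one_mul, norm_pow,
    Real.norm_of_nonneg (phiCoeff_pos hα₀ n).le]
  gcongr
  exact (phiCoeff_pos hα₀ n).le

theorem phiCoeff_mul_integral (hα : 0 < α) {x : ℝ} (hx : 0 < x) (n : ℕ) :
    phiCoeff α n * ∫ s in 0..x, (x - s) ^ (α - 1) * (s * (s ^ (1 + α) / (1 + α)) ^ n) =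
      (1 + α) * Gamma α * (phiCoeff α (n + 1) * (x ^ (1 + α) / (1 + α)) ^ (n + 1)) := by
  have hu : 0 < (1 + α) * n + 2 := by positivity
  have hpt : ∀ s ∈ uIcc 0 x, (x - s) ^ (α - 1) * (s * (s ^ (1 + α) / (1 + α)) ^ n) =
      ((1 + α) ^ n)⁻¹ * (s ^ ((1 + α) * n + 2 - 1) * (x - s) ^ (α - 1)) := by
    intro s hs
    rw [uIcc_of_le hx.le] at hs
    rw [div_pow, ← rpow_mul_natCast hs.1, (by ring : (1 + α) * n + 2 - 1 = (1 + α) * n + 1),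
      rpow_add_one' hs.1 (by positivity)]
    ring
  rw [intervalIntegral.integral_congr hpt, intervalIntegral.integral_const_mul,
    integral_rpow_mul_sub_rpow hx hu hα, phiCoeff_succ,
    (by push_cast; ring : (1 + α) * n + 2 + α - 1 = (1 + α) * ((n + 1 : ℕ) : ℝ)),
    rpow_mul_natCast hx.le, div_pow]
  have hΓ : 0 < Gamma ((1 + α) * n + 2 + α) := Gamma_pos_of_pos (by positivity)
  field_simp
  ring

theorem hasSum_integral_sub_rpow_mul_PhiF (hα₀ : 0 < α) (hα₁ : α < 1) {x : ℝ}
    (hx : 0 ≤ x) :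
    HasSum (fun n => ∫ s in 0..x,
        (x - s) ^ (α - 1) * (s * ((-1) ^ n * phiCoeff α n * (s ^ (1 + α) / (1 + α)) ^ n)))
      (∫ s in 0..x, (x - s) ^ (α - 1) * (s * PhiF α s)) := by
  refine intervalIntegral.hasSum_integral_of_dominated_convergence
    (fun n s => (x - s) ^ (α - 1) * (x * (phiCoeff α n * (x ^ (1 + α) / (1 + α)) ^ n)))
    (fun n => ?_) (fun n => ae_of_all _ fun s hs => ?_) (ae_of_all _ fun _ _ => ?_) ?_
    (ae_of_all _ fun s _ => ?_)
  · fun_prop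
  · rw [uIoc_of_le hx] at hs
    have hk : 0 ≤ (x - s) ^ (α - 1) := rpow_nonneg (sub_nonneg.2 hs.2) _
    have hb := (phiCoeff_pos hα₀ n).le
    have hTs : 0 ≤ s ^ (1 + α) / (1 + α) := by have := hs.1.le; positivity
    rw [norm_mul, norm_mul, norm_mul, norm_mul, norm_pow, norm_neg, norm_one, one_pow, one_mul,
      norm_pow, Real.norm_of_nonneg hk, Real.norm_of_nonneg hs.1.le, Real.norm_of_nonneg hb,
      Real.norm_of_nonneg hTs]
    gcongr
    exacts [hs.2, hs.1.le, hs.2]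
  · exact ((summable_phiCoeff_mul_pow hα₀ hα₁ _).mul_left x).mul_left _
  · simp_rw [tsum_mul_left]
    exact (intervalIntegrable_sub_rpow hα₀ x 0 x).mul_const _
  · exact ((summable_phiSeries hα₀ hα₁ _).hasSum.mul_left s).mul_left _

theorem continuous_PhiF (hα₀ : 0 < α) (hα₁ : α < 1) : Continuous (PhiF α) :=
  (continuous_phiSeries hα₀ hα₁).comp
    ((continuous_id.rpow_const fun _ => Or.inr (by linarith)).div_const _)

theorem PhiF_zero (hα : 0 < α) : PhiF α 0 = 1 := by
  rw [PhiF_eq_phiSeries, zero_rpow (by linarith), zero_div, phiSeries,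
    tsum_eq_single 0 fun n hn => by simp [hn]]
  simp [phiCoeff_zero]

theorem PhiF_eq_one_sub_integral (hα₀ : 0 < α) (hα₁ : α < 1) {x : ℝ} (hx : 0 ≤ x) :
    PhiF α x = 1 - 1 / ((1 + α) * Gamma α) * ∫ s in 0..x, (x - s) ^ (α - 1) * (s * PhiF α s) := by
  rcases hx.eq_or_lt with rfl | hx
  · simp [PhiF_zero hα₀]
  set T := x ^ (1 + α) / (1 + α)
  have hK : 0 < (1 + α) * Gamma α := mul_pos (by linarith) (Gamma_pos_of_pos hα₀)
  have hterm : ∀ n : ℕ, ∫ s in 0..x,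
      (x - s) ^ (α - 1) * (s * ((-1) ^ n * phiCoeff α n * (s ^ (1 + α) / (1 + α)) ^ n)) =
        -((1 + α) * Gamma α) * ((-1) ^ (n + 1) * phiCoeff α (n + 1) * T ^ (n + 1)) := by
    intro n
    simp_rw [mul_left_comm _ ((-1 : ℝ) ^ n * phiCoeff α n), mul_assoc ((-1 : ℝ) ^ n),
      intervalIntegral.integral_const_mul, phiCoeff_mul_integral hα₀ hx]
    ring
  have hseries := (summable_phiSeries hα₀ hα₁ T).hasSum
  rw [← hasSum_nat_add_iff' 1] at hseries
  simp only [Finset.range_one, Finset.sum_singleton, pow_zero, phiCoeff_zero, one_mul] at hseries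
  have hint := (hasSum_integral_sub_rpow_mul_PhiF hα₀ hα₁ hx.le).unique
    ((funext hterm).symm ▸ hseries.mul_left _)
  rw [hint, PhiF_eq_phiSeries, phiSeries]
  field_simp
  ring

end Phi

/-- positivity of `Φ` on `[0,∞)`. -/
theorem Phi_pos (α : ℝ) (hα : α ∈ Set.Ioo (0:ℝ) 1) :
    ∀ x ≥ (0:ℝ), 0 < PhiF α x :=
  pos_of_volterra hα.1 hα.2.le
    (one_div_nonneg.2 (mul_pos (by linarith [hα.1]) (Gamma_pos_of_pos hα.1)).le)
    (continuous_PhiF hα.1 hα.2).continuousOn fun _ hx => PhiF_eq_one_sub_integral hα.1 hα.2 hx
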